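/- Let σ ∈ S_n with inversion set A = Inv(σ) viewed as an initial section of the staircase valued digraph 𝒜. For (a,b) ∉ A, the vertex (a,b) is erasable in the peeled valued digraph 𝒜_A if and only if a and b are adjacent in σ (i.e., σ⁻¹(b) = σ⁻¹(a)+1). -/

import Mathlib

open scoped Classical

variable {V : Type*}

/-- A digraph is acyclic when its transitive closure is irreflexive. -/
def Acyclic (E : V → V → Prop) : Prop := ∀ x, ¬ Relation.TransGen E x x

/-- `θ` is an out-degree compatible valuation: `θ x ≤ d⁺(x)` for every vertex. -/
def IsOCV (E : V → V → Prop) (θ : V → ℕ) : Prop :=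
  ∀ x, ∃ s : Finset V, (∀ y ∈ s, E x y) ∧ θ x ≤ s.card

/-- The current valuation after the vertices of `R` have been peeled. -/
noncomputable def curVal (E : V → V → Prop) (θ : V → ℕ) (R : Finset V) (x : V) : ℕ :=
  θ x - (R.filter fun y => E x y).card

/-- `x` is erasable in the valued digraph obtained after peeling the vertices of `R`. -/
def ErasableAt (E : V → V → Prop) (θ : V → ℕ) (R : Finset V) (x : V) : Prop :=
  x ∉ R ∧ curVal E θ R x = 0 ∧ ∀ z, z ∉ R → E z x → curVal E θ R z ≠ 0

/-- `PeelFrom E θ R L`: starting from the state where `R` has been peeled, the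
list `L` is a valid sequence of successive peelings. -/
def PeelFrom (E : V → V → Prop) (θ : V → ℕ) : Finset V → List V → Prop
  | _, [] => True
  | R, x :: L => ErasableAt E θ R x ∧ PeelFrom E θ (insert x R) L

/-- `A` is an initial section of some peeling sequence of the valued digraph `(G, θ)`. -/
def IsInitialSection (E : V → V → Prop) (θ : V → ℕ) (A : Finset V) : Prop :=
  ∃ L : List V, PeelFrom E θ ∅ L ∧ L.toFinset = A
/-- The inversion set of a permutation `σ ∈ S_n`:
pairs `(a,b)` with `a < b` and `σ⁻¹ a > σ⁻¹ b`. -/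
def InvSet {n : ℕ} (σ : Equiv.Perm (Fin n)) : Finset (Fin n × Fin n) :=
  Finset.univ.filter fun p => p.1 < p.2 ∧ σ⁻¹ p.2 < σ⁻¹ p.1

/-- Coxeter length of a permutation, i.e. its number of inversions. -/
def permLen {n : ℕ} (σ : Equiv.Perm (Fin n)) : ℕ := (InvSet σ).card

/-- `s` is a simple transposition `s_i = (i, i+1)`. -/
def IsSimpleT {n : ℕ} (s : Equiv.Perm (Fin n)) : Prop :=
  ∃ i j : Fin n, (j : ℕ) = (i : ℕ) + 1 ∧ s = Equiv.swap i j

/-- The right weak order on `S_n`: `σ ≤_R τ` iff `τ = σ s_{i_1} ⋯ s_{i_k}`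
with `ℓ(τ) = ℓ(σ) + k`. -/
def WeakLE {n : ℕ} (σ τ : Equiv.Perm (Fin n)) : Prop :=
  ∃ l : List (Equiv.Perm (Fin n)), (∀ s ∈ l, IsSimpleT s) ∧ τ = σ * l.prod ∧
    permLen τ = permLen σ + l.length

/-- The staircase diagram `λ_n = {(a,b) : a < b}`. -/
def Lam (n : ℕ) := {p : Fin n × Fin n // p.1 < p.2}

/-- Arcs of the staircase valued digraph `𝒜`: from `(a,b)` to the boxes
`(a,k)` and `(k,b)` of the hook based on `(a,b)`, for `a < k < b`. -/
def lamE {n : ℕ} (p q : Lam n) : Prop :=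
  p ≠ q ∧ ((q.1.1 = p.1.1 ∧ q.1.2 < p.1.2) ∨ (q.1.2 = p.1.2 ∧ p.1.1 < q.1.1))

/-- Valuation of the staircase valued digraph: `θ(a,b) = b - a - 1`. -/
def lamTheta {n : ℕ} (p : Lam n) : ℕ := (p.1.2 : ℕ) - (p.1.1 : ℕ) - 1

instance {n : ℕ} : Fintype (Lam n) := Subtype.fintype _

/-- The inversion set of `σ ∈ S_n`, as a set of boxes of the staircase diagram. -/
def invLam {n : ℕ} (σ : Equiv.Perm (Fin n)) : Finset (Lam n) :=
  Finset.univ.filter fun p => σ⁻¹ p.1.2 < σ⁻¹ p.1.1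

/-! Write `π = σ⁻¹` for the position map. For `(a,b) ∉ A`, the value `θ_A(a,b)` counts the
`k ∈ (a,b)` standing between `a` and `b` in the one-line notation of `σ`, so it vanishes exactly
when `NoneBetween π a b`. If `a` and `b` are adjacent, every in-neighbour `(c,b)` or `(a,c)`
outside `A` has `a`, resp. `b`, standing between its ends. If they are not adjacent while
`θ_A(a,b) = 0`, the entries between them are all `< a` or `> b`; the last entry `< a`, or the
first entry `> b`, then gives an in-neighbour of value `0`. -/

section NoneBetween

open Set OrderDual

variable {α β : Type*} [LinearOrder α] [LinearOrder β] (π : α → β)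

def NoneBetween (a b : α) : Prop := ∀ k ∈ Ioo a b, π k ∉ Ioo (π a) (π b)

variable {π}

theorem noneBetween_dual_iff {a b : α} :
    NoneBetween (toDual ∘ π ∘ ofDual) (toDual b) (toDual a) ↔ NoneBetween π a b :=
  ⟨fun h k hk hπk => h (toDual k) hk.symm hπk.symm,
    fun h k hk hπk => h (ofDual k) hk.symm hπk.symm⟩

theorem NoneBetween.of_covBy {a b : α} (h : π a ⋖ π b) : NoneBetween π a b :=
  fun _ _ hk => h.2 hk.1 hk.2

theorem not_noneBetween_of_covBy_of_lt (hπ : π.Injective) {a b c : α} (hab : a < b)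
    (h : π a ⋖ π b) (hca : c < a) (hcb : π c < π b) : ¬ NoneBetween π c b := fun hc =>
  hc a ⟨hca, hab⟩ ⟨(h.le_of_lt hcb).lt_of_ne (hπ.ne hca.ne), h.lt⟩

theorem not_noneBetween_of_covBy_of_gt (hπ : π.Injective) {a b c : α} (hab : a < b)
    (h : π a ⋖ π b) (hbc : b < c) (hac : π a < π c) : ¬ NoneBetween π a c := fun hc =>
  hc b ⟨hab, hbc⟩ ⟨h.lt, (h.ge_of_gt hac).lt_of_ne (hπ.ne hbc.ne)⟩

theorem NoneBetween.exists_lt [Finite α] {a b c₀ : α} (hab : NoneBetween π a b)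
    (hc₀a : c₀ < a) (hc₀ : π c₀ ∈ Ioo (π a) (π b)) :
    ∃ c < a, π c ∈ Ioo (π a) (π b) ∧ NoneBetween π c b := by
  obtain ⟨c, ⟨hca, hc⟩, hmax⟩ := exists_max_image {c | c < a ∧ π c ∈ Ioo (π a) (π b)} π
    (toFinite _) ⟨c₀, hc₀a, hc₀⟩
  refine ⟨c, hca, hc, fun m ⟨hcm, hmb⟩ ⟨hπcm, hπmb⟩ => ?_⟩
  rcases lt_trichotomy m a with hma | rfl | ham
  · exact (hmax m ⟨hma, hc.1.trans hπcm, hπmb⟩).not_gt hπcm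
  · exact hc.1.not_gt hπcm
  · exact hab m ⟨ham, hmb⟩ ⟨hc.1.trans hπcm, hπmb⟩

theorem NoneBetween.exists_gt [Finite α] {a b c₀ : α} (hab : NoneBetween π a b)
    (hbc₀ : b < c₀) (hc₀ : π c₀ ∈ Ioo (π a) (π b)) :
    ∃ c > b, π c ∈ Ioo (π a) (π b) ∧ NoneBetween π a c := by
  obtain ⟨c, hbc, hc, hca⟩ := (noneBetween_dual_iff.2 hab).exists_lt
    (c₀ := toDual c₀) hbc₀ hc₀.symm
  exact ⟨ofDual c, hbc, hc.symm, noneBetween_dual_iff.1 hca⟩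

theorem NoneBetween.exists_of_not_covBy [Finite α] (hπ : π.Surjective) {a b : α}
    (hab : NoneBetween π a b) (hlt : π a < π b) (h : ¬ π a ⋖ π b) :
    (∃ c < a, π c < π b ∧ NoneBetween π c b) ∨ (∃ c > b, π a < π c ∧ NoneBetween π a c) := by
  obtain ⟨p, hp⟩ := (not_covBy_iff_exists_mem_Ioo hlt).1 h
  obtain ⟨k, rfl⟩ := hπ p
  rcases lt_or_ge k a with hka | hak
  · obtain ⟨c, hca, hc, hcb⟩ := hab.exists_lt hka hp
    exact .inl ⟨c, hca, hc.2, hcb⟩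
  rcases lt_or_ge b k with hbk | hkb
  · obtain ⟨c, hbc, hc, hac⟩ := hab.exists_gt hbk hp
    exact .inr ⟨c, hbc, hc.1, hac⟩
  refine absurd hp (hab k ⟨hak.lt_of_ne ?_, hkb.lt_of_ne ?_⟩) <;> rintro rfl
  · exact hp.1.false
  · exact hp.2.false

end NoneBetween

open Finset

section Staircase

variable {n : ℕ}

def Lam.mk (a b : Fin n) (h : a < b) : Lam n := Subtype.mk (a, b) h

@[simp] theorem Lam.mk_fst (a b : Fin n) (h : a < b) : (Lam.mk a b h).1.1 = a := rfl

@[simp] theorem Lam.mk_snd (a b : Fin n) (h : a < b) : (Lam.mk a b h).1.2 = b := rfl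

theorem Lam.ext {x y : Lam n} (h₁ : x.1.1 = y.1.1) (h₂ : x.1.2 = y.1.2) : x = y :=
  Subtype.ext (Prod.ext h₁ h₂)

theorem lamE_iff {x y : Lam n} :
    lamE x y ↔ (y.1.1 = x.1.1 ∧ y.1.2 < x.1.2) ∨ (y.1.2 = x.1.2 ∧ x.1.1 < y.1.1) := by
  refine ⟨And.right, fun h => ⟨?_, h⟩⟩
  rintro rfl
  rcases h with ⟨-, h⟩ | ⟨-, h⟩ <;> exact h.false

variable (σ : Equiv.Perm (Fin n))

theorem mem_invLam {x : Lam n} : x ∈ invLam σ ↔ σ⁻¹ x.1.2 < σ⁻¹ x.1.1 := by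
  simp [invLam]

theorem lt_of_notMem_invLam {x : Lam n} (hx : x ∉ invLam σ) : σ⁻¹ x.1.1 < σ⁻¹ x.1.2 :=
  (not_lt.1 ((mem_invLam σ).not.1 hx)).lt_of_ne (σ⁻¹.injective.ne x.2.ne)

theorem card_filter_lamE_invLam {x : Lam n} (hx : x ∉ invLam σ) :
    #{y ∈ invLam σ | lamE x y} =
      #{k ∈ Ioo x.1.1 x.1.2 | σ⁻¹ k < σ⁻¹ x.1.1 ∨ σ⁻¹ x.1.2 < σ⁻¹ k} := by
  have hπ := lt_of_notMem_invLam σ hx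
  -- an out-neighbour of `x` is determined by its endpoint not shared with `x`; one on each arm
  -- of the hook cannot have the same such endpoint, as that would make `x` an inversion
  refine card_bij (fun y _ => if y.1.1 = x.1.1 then y.1.2 else y.1.1) ?_ ?_ ?_
  · intro y hy
    rw [mem_filter, mem_invLam, lamE_iff] at hy
    rcases hy with ⟨hy, ⟨h₁, h₂⟩ | ⟨h₂, h₁⟩⟩
    · simp only [h₁, if_true, mem_filter, mem_Ioo]
      exact ⟨⟨h₁ ▸ y.2, h₂⟩, .inl (h₁ ▸ hy)⟩
    · simp only [h₁.ne', if_false, mem_filter, mem_Ioo]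
      exact ⟨⟨h₁, h₂ ▸ y.2⟩, .inr (h₂ ▸ hy)⟩
  · intro y hy y' hy' h
    rw [mem_filter, mem_invLam, lamE_iff] at hy hy'
    rcases hy with ⟨hy, ⟨h₁, h₂⟩ | ⟨h₂, h₁⟩⟩ <;>
      rcases hy' with ⟨hy', ⟨h₁', h₂'⟩ | ⟨h₂', h₁'⟩⟩
    · simp only [h₁, h₁', if_true] at h
      exact Lam.ext (h₁.trans h₁'.symm) h
    · simp only [h₁, h₁'.ne', if_true, if_false] at h
      rw [h₁, h] at hy
      rw [h₂'] at hy'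
      exact absurd (hy'.trans hy) hπ.not_gt
    · simp only [h₁.ne', h₁', if_true, if_false] at h
      rw [h₁', ← h] at hy'
      rw [h₂] at hy
      exact absurd (hy.trans hy') hπ.not_gt
    · simp only [h₁.ne', h₁'.ne', if_false] at h
      exact Lam.ext h (h₂.trans h₂'.symm)
  · intro k hk
    rw [mem_filter, mem_Ioo] at hk
    obtain ⟨⟨hak, hkb⟩, hk | hk⟩ := hk
    · refine ⟨Lam.mk x.1.1 k hak, ?_, by simp⟩
      rw [mem_filter, mem_invLam, lamE_iff]
      exact ⟨hk, .inl ⟨rfl, hkb⟩⟩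
    · refine ⟨Lam.mk k x.1.2 hkb, ?_, by simp [hak.ne']⟩
      rw [mem_filter, mem_invLam, lamE_iff]
      exact ⟨hk, .inr ⟨rfl, hak⟩⟩

theorem curVal_eq_card {x : Lam n} (hx : x ∉ invLam σ) :
    curVal lamE lamTheta (invLam σ) x =
      #{k ∈ Ioo x.1.1 x.1.2 | σ⁻¹ x.1.1 < σ⁻¹ k ∧ σ⁻¹ k < σ⁻¹ x.1.2} := by
  have hθ : lamTheta x = #(Ioo x.1.1 x.1.2) := (Fin.card_Ioo _ _).symm
  have houtside : #{k ∈ Ioo x.1.1 x.1.2 | ¬(σ⁻¹ x.1.1 < σ⁻¹ k ∧ σ⁻¹ k < σ⁻¹ x.1.2)} =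
      #{k ∈ Ioo x.1.1 x.1.2 | σ⁻¹ k < σ⁻¹ x.1.1 ∨ σ⁻¹ x.1.2 < σ⁻¹ k} := by
    refine congrArg card (filter_congr fun k hk => ?_)
    rw [mem_Ioo] at hk
    rw [not_and_or, not_lt, not_lt, (σ⁻¹.injective.ne hk.1.ne').le_iff_lt,
      (σ⁻¹.injective.ne hk.2.ne').le_iff_lt]
  rw [curVal, card_filter_lamE_invLam σ hx, hθ, ← houtside,
    ← card_filter_add_card_filter_not (fun k => σ⁻¹ x.1.1 < σ⁻¹ k ∧ σ⁻¹ k < σ⁻¹ x.1.2),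
    Nat.add_sub_cancel]

theorem curVal_eq_zero_iff {x : Lam n} (hx : x ∉ invLam σ) :
    curVal lamE lamTheta (invLam σ) x = 0 ↔ NoneBetween (⇑σ⁻¹) x.1.1 x.1.2 := by
  rw [curVal_eq_card σ hx, card_eq_zero, filter_eq_empty_iff]
  exact forall_congr' fun k => by rw [mem_Ioo]; rfl

end Staircase

/-- for `A = Inv(σ)` viewed as an initial section of the staircase
valued digraph `𝒜`, a box `(a,b) ∉ A` is erasable in the peeled valued digraph
`𝒜_A` iff `a` and `b` are adjacent in `σ`, i.e. `σ⁻¹ b = σ⁻¹ a + 1`. -/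
theorem erasable_iff_adjacent (n : ℕ) (σ : Equiv.Perm (Fin n)) (v : Lam n)
    (hv : v ∉ invLam σ) :
    ErasableAt lamE lamTheta (invLam σ) v ↔
      ((σ⁻¹ v.1.2 : Fin n) : ℕ) = ((σ⁻¹ v.1.1 : Fin n) : ℕ) + 1 := by
  rw [eq_comm, ← Nat.covBy_iff_add_one_eq, ← Fin.covBy_iff]
  constructor
  · rintro ⟨-, hv₀, hin⟩
    by_contra hcov
    rcases ((curVal_eq_zero_iff σ hv).1 hv₀).exists_of_not_covBy σ⁻¹.surjective
      (lt_of_notMem_invLam σ hv) hcov with ⟨c, hca, hcb, hc⟩ | ⟨c, hbc, hac, hc⟩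
    · have hz : Lam.mk c v.1.2 (hca.trans v.2) ∉ invLam σ := (mem_invLam σ).not.2 hcb.not_gt
      exact hin _ hz (lamE_iff.2 (.inr ⟨rfl, hca⟩)) ((curVal_eq_zero_iff σ hz).2 hc)
    · have hz : Lam.mk v.1.1 c (v.2.trans hbc) ∉ invLam σ := (mem_invLam σ).not.2 hac.not_gt
      exact hin _ hz (lamE_iff.2 (.inl ⟨rfl, hbc⟩)) ((curVal_eq_zero_iff σ hz).2 hc)
  · intro hcov
    refine ⟨hv, (curVal_eq_zero_iff σ hv).2 (.of_covBy hcov), fun z hz hzv => ?_⟩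
    rw [Ne, curVal_eq_zero_iff σ hz]
    have hzπ := lt_of_notMem_invLam σ hz
    rcases lamE_iff.1 hzv with ⟨h₁, h₂⟩ | ⟨h₂, h₁⟩
    · rw [← h₁] at hzπ ⊢
      exact not_noneBetween_of_covBy_of_gt σ⁻¹.injective v.2 hcov h₂ hzπ
    · rw [← h₂] at hzπ ⊢
      exact not_noneBetween_of_covBy_of_lt σ⁻¹.injective v.2 hcov h₁ hzπ
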